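/- Let B be an integral domain, A ⊆ B a subring, and n ≥ 1 an integer. If f ∈ End_A(A^n) is an n-tuple of polynomials with coefficients in A which, regarded as an endomorphism over B, admits a two-sided compositional inverse with coefficients in B, and if Jac(f) is a unit of A, then the compositional inverse of f has all its coefficients in A, i.e. f ∈ Aut_A(A^n). Consequently Aut_A(A^n) = { f ∈ End_A(A^n) ∩ Aut_B(A^n) : Jac(f) ∈ A^* }. -/

import Mathlib

open MvPolynomial

/-- Endomorphisms of affine `n`-space over `R`: `n`-tuples of polynomials in
`R[x_1,…,x_n]`, with composition given by substitution. -/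
def PolyEnd (R : Type*) [CommRing R] (n : ℕ) : Type _ := Fin n → MvPolynomial (Fin n) R

namespace PolyEnd

variable {R S : Type*} [CommRing R] [CommRing S] {n : ℕ}

noncomputable instance : Monoid (PolyEnd R n) where
  one := fun i => X i
  mul f g := fun i => bind₁ g (f i)
  mul_assoc f g h := funext fun i => by
    show bind₁ h (bind₁ g (f i)) = bind₁ (fun j => bind₁ h (g j)) (f i)
    exact bind₁_bind₁ g h (f i)
  one_mul f := funext fun i => by
    show bind₁ f (X i) = f i
    exact bind₁_X_right f i
  mul_one f := funext fun i => by
    show bind₁ X (f i) = f i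
    rw [bind₁_X_left, AlgHom.id_apply]

@[simp] lemma mul_apply (f g : PolyEnd R n) (i : Fin n) :
    (f * g) i = bind₁ g (f i) := rfl

@[simp] lemma one_apply (i : Fin n) : (1 : PolyEnd R n) i = X i := rfl

/-- The Jacobian determinant of an endomorphism. -/
noncomputable def jac (f : PolyEnd R n) : MvPolynomial (Fin n) R :=
  (Matrix.of fun i j => pderiv j (f i)).det

/-- The chain rule for partial derivatives of a substitution. -/
lemma pderiv_bind₁ (g : Fin n → MvPolynomial (Fin n) R)
    (p : MvPolynomial (Fin n) R) (j : Fin n) :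
    pderiv j (bind₁ g p) = ∑ i, bind₁ g (pderiv i p) * pderiv j (g i) := by
  induction p using MvPolynomial.induction_on with
  | C a => simp
  | add p q hp hq => simp [hp, hq, Finset.sum_add_distrib, add_mul]
  | mul_X p i hp =>
      rw [map_mul, bind₁_X_right, pderiv_mul, hp]
      have key : ∀ l : Fin n, bind₁ g (pderiv l (p * X i)) * pderiv j (g l)
          = bind₁ g (pderiv l p) * pderiv j (g l) * g i
            + (if l = i then bind₁ g p * pderiv j (g i) else 0) := by
        intro l
        rw [pderiv_mul, pderiv_X]
        by_cases h : l = i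
        · subst h
          simp only [Pi.single_apply, if_pos rfl, map_add, map_mul, bind₁_X_right,
            bind₁_C_right, if_pos rfl]
          ring_nf
          simp [mul_comm, mul_left_comm, mul_assoc]
        · simp only [Pi.single_apply, if_neg (Ne.symm h), if_neg h, mul_zero, map_mul,
            map_add, map_zero, add_zero, bind₁_X_right]
          ring
      rw [Finset.sum_congr rfl fun l _ => key l, Finset.sum_add_distrib]
      simp [Finset.sum_mul]

lemma jac_one : jac (1 : PolyEnd R n) = 1 := by
  unfold jac
  have : (Matrix.of fun i j => pderiv j ((1 : PolyEnd R n) i))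
      = (1 : Matrix (Fin n) (Fin n) (MvPolynomial (Fin n) R)) := by
    ext i j
    simp [Matrix.one_apply, pderiv_X, Pi.single_apply, eq_comm]
  rw [this, Matrix.det_one]

/-- The chain rule for Jacobians. -/
lemma jac_mul (f g : PolyEnd R n) : jac (f * g) = bind₁ g (jac f) * jac g := by
  unfold jac
  have : (Matrix.of fun i j => pderiv j ((f * g) i))
      = (Matrix.of fun i l => pderiv l (f i)).map (bind₁ g)
        * (Matrix.of fun l j => pderiv j (g l)) := by
    ext i j
    simp [Matrix.mul_apply]
    exact congrArg _ (pderiv_bind₁ g (f i) j)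
  rw [this, Matrix.det_mul]
  congr 1
  exact ((bind₁ g).map_det (Matrix.of fun i l => pderiv l (f i))).symm

end PolyEnd

/-- Automorphisms of affine `n`-space over `R` : endomorphisms admitting a two-sided
compositional inverse. -/
abbrev PolyAut (R : Type*) [CommRing R] (n : ℕ) := (PolyEnd R n)ˣ

namespace PolyAut

variable {R S : Type*} [CommRing R] [CommRing S] {n : ℕ}

lemma bind₁_val_injective (f : PolyAut R n) :
    Function.Injective (bind₁ (σ := Fin n) (f.val : Fin n → MvPolynomial (Fin n) R)) := by
  intro p q h
  have hinv : ∀ r : MvPolynomial (Fin n) R, bind₁ (f.inv : Fin n → _) (bind₁ (f.val : Fin n → _) r) = r := by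
    intro r
    refine (bind₁_bind₁ _ _ r).trans ?_
    have : (fun i => bind₁ (f.inv : Fin n → _) ((f.val : Fin n → _) i)) = (f.val * f.inv : PolyEnd R n) := rfl
    rw [this, f.val_inv]
    show bind₁ (fun i => X i) r = r
    rw [show (fun i : Fin n => (X i : MvPolynomial (Fin n) R)) = X from rfl,
      bind₁_X_left, AlgHom.id_apply]
  calc p = bind₁ (f.inv : Fin n → _) (bind₁ (f.val : Fin n → _) p) := (hinv p).symm
    _ = bind₁ (f.inv : Fin n → _) (bind₁ (f.val : Fin n → _) q) := by rw [h]
    _ = q := hinv q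

end PolyAut

/-- The subgroup of automorphisms of Jacobian `1`. -/
noncomputable def SAutGrp (R : Type*) [CommRing R] (n : ℕ) : Subgroup (PolyAut R n) where
  carrier := {f | PolyEnd.jac f.val = 1}
  one_mem' := PolyEnd.jac_one
  mul_mem' := by
    intro f g hf hg
    show PolyEnd.jac (f.val * g.val) = 1
    rw [PolyEnd.jac_mul, hf, hg, map_one, one_mul]
  inv_mem' := by
    intro f hf
    show PolyEnd.jac f.inv = 1
    apply PolyAut.bind₁_val_injective f
    have h1 : PolyEnd.jac (f.inv * f.val) = 1 := by
      rw [f.inv_val]; exact PolyEnd.jac_one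
    rw [PolyEnd.jac_mul, hf, mul_one] at h1
    rw [map_one]
    exact h1

lemma mem_SAutGrp_iff {R : Type*} [CommRing R] {n : ℕ} (f : PolyAut R n) :
    f ∈ SAutGrp R n ↔ PolyEnd.jac f.val = 1 := Iff.rfl

section Translations

variable {R : Type*} [CommRing R] {n : ℕ}

/-- The translation endomorphism `(x_1 + c_1, …, x_n + c_n)`. -/
noncomputable def translEnd (c : Fin n → R) : PolyEnd R n := fun i => X i + C (c i)

lemma translEnd_mul (c d : Fin n → R) :
    translEnd c * translEnd d = translEnd (c + d) := by
  funext i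
  show bind₁ (translEnd d) (translEnd c i) = translEnd (c + d) i
  simp only [translEnd, map_add, bind₁_C_right]
  rw [show bind₁ (translEnd d) (X i) = translEnd d i from bind₁_X_right _ i]
  rw [show bind₁ (translEnd d) (C (c i)) = C (c i) from bind₁_C_right _ _]
  show X i + C (d i) + C (c i) = X i + C (c i + d i)
  rw [map_add]; ring

lemma translEnd_zero : translEnd (0 : Fin n → R) = 1 := by
  funext i
  show X i + C 0 = X i
  simp

/-- The translation automorphism `(x_1 + c_1, …, x_n + c_n)`. -/
noncomputable def transl (c : Fin n → R) : PolyAut R n where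
  val := translEnd c
  inv := translEnd (-c)
  val_inv := by rw [translEnd_mul, add_neg_cancel, translEnd_zero]
  inv_val := by rw [translEnd_mul, neg_add_cancel, translEnd_zero]

@[simp] lemma transl_val (c : Fin n → R) : (transl c).val = translEnd c := rfl

lemma jac_translEnd (c : Fin n → R) : PolyEnd.jac (translEnd c) = 1 := by
  unfold PolyEnd.jac
  have : (Matrix.of fun i j => pderiv j (translEnd c i))
      = (1 : Matrix (Fin n) (Fin n) (MvPolynomial (Fin n) R)) := by
    ext i j
    simp [translEnd, Matrix.one_apply, pderiv_X, Pi.single_apply, eq_comm]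
  rw [this, Matrix.det_one]

lemma transl_mem_SAutGrp (c : Fin n → R) : transl c ∈ SAutGrp R n := jac_translEnd c

/-- The translation as element of `SAut`. -/
noncomputable def translS (c : Fin n → R) : ↥(SAutGrp R n) := ⟨transl c, transl_mem_SAutGrp c⟩

/-- `f` is a translation. -/
def IsTranslation (f : PolyAut R n) : Prop := ∃ c : Fin n → R, f = transl c

end Translations

section Linear

variable {R : Type*} [CommRing R] {n : ℕ}

/-- The linear endomorphism associated with a matrix. -/
noncomputable def linEnd (M : Matrix (Fin n) (Fin n) R) : PolyEnd R n :=
  fun i => ∑ j, C (M i j) * X j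

/-- `f` is a linear automorphism (i.e. in the image of `GL_n`). -/
def IsLinear (f : PolyAut R n) : Prop := ∃ M : Matrix (Fin n) (Fin n) R, f.val = linEnd M

/-- `f` is a linear automorphism given by a matrix of determinant 1
(i.e. in the image of `SL_n`). -/
def MemSL (f : PolyAut R n) : Prop :=
  ∃ M : Matrix (Fin n) (Fin n) R, M.det = 1 ∧ f.val = linEnd M

/-- `f` is a triangular automorphism. -/
def IsTriangular (f : PolyAut R n) : Prop :=
  ∃ (a : Fin n → Rˣ) (b : Fin n → MvPolynomial (Fin n) R),
    (∀ i : Fin n, b i ∈ MvPolynomial.supported R {j : Fin n | (j : ℕ) < (i : ℕ)}) ∧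
    ∀ i : Fin n, f.val i = C ((a i : R)) * X i + b i

/-- The tame subgroup, generated by linear and triangular automorphisms. -/
noncomputable def TameGrp (R : Type*) [CommRing R] (n : ℕ) : Subgroup (PolyAut R n) :=
  Subgroup.closure {f | IsLinear f ∨ IsTriangular f}

end Linear

section Map

variable {R S : Type*} [CommRing R] [CommRing S] {n : ℕ}

/-- Applying a ring homomorphism to all coefficients, as a monoid homomorphism of
endomorphisms of affine `n`-space. -/
noncomputable def endMapHom (φ : R →+* S) : PolyEnd R n →* PolyEnd S n where
  toFun f := fun i => MvPolynomial.map φ (f i)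
  map_one' := funext fun i => by
    show MvPolynomial.map φ (X i) = X i
    simp
  map_mul' f g := funext fun i => by
    show MvPolynomial.map φ (bind₁ g (f i)) = bind₁ (fun j => MvPolynomial.map φ (g j)) (MvPolynomial.map φ (f i))
    exact map_bind₁ _ _ _

/-- Applying a ring homomorphism to all coefficients, on automorphisms. -/
noncomputable def autMap (φ : R →+* S) : PolyAut R n →* PolyAut S n :=
  Units.map (endMapHom φ)

lemma jac_endMapHom (φ : R →+* S) (f : PolyEnd R n) :
    PolyEnd.jac (endMapHom φ f) = MvPolynomial.map φ (PolyEnd.jac f) := by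
  unfold PolyEnd.jac
  have : (Matrix.of fun i j => pderiv j ((endMapHom φ f) i))
      = (Matrix.of fun i j => pderiv j (f i)).map (MvPolynomial.map φ) :=
    Matrix.ext fun i j => by
      exact (pderiv_map : pderiv j (MvPolynomial.map φ (f i)) = MvPolynomial.map φ (pderiv j (f i)))
  rw [this, RingHom.map_det]
  rfl

/-- Specialisation of an automorphism over `R[t]` at a value `t₀ ∈ R`. -/
noncomputable def specAut (t0 : R) : PolyAut (Polynomial R) n →* PolyAut R n :=
  autMap (Polynomial.evalRingHom t0)

lemma specAut_mem_SAutGrp (h : PolyAut (Polynomial R) n)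
    (hh : h ∈ SAutGrp (Polynomial R) n) (t0 : R) :
    specAut t0 h ∈ SAutGrp R n := by
  show PolyEnd.jac ((specAut t0 h).val) = 1
  have : (specAut t0 h).val = endMapHom (Polynomial.evalRingHom t0) h.val := rfl
  rw [this, jac_endMapHom, hh, map_one]

/-- Specialisation, from `SAut` over `R[t]` to `SAut` over `R`. -/
noncomputable def specSAut (t0 : R) (h : PolyAut (Polynomial R) n)
    (hh : h ∈ SAutGrp (Polynomial R) n) : ↥(SAutGrp R n) :=
  ⟨specAut t0 h, specAut_mem_SAutGrp h hh t0⟩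

/-- A subgroup `N` of `SAut_k(𝔸ⁿ)` is closed under specialisation if for every
automorphism `h` over `k[t]` of Jacobian `1` all of whose specialisations at
`t₀ ≠ 0` lie in `N`, the specialisation at `0` also lies in `N`. Every subgroup
that is closed in the ind-topology has this property. -/
def ClosedUnderSpec {R : Type*} [CommRing R] {n : ℕ} (N : Subgroup ↥(SAutGrp R n)) : Prop :=
  ∀ (h : PolyAut (Polynomial R) n) (hh : h ∈ SAutGrp (Polynomial R) n),
    (∀ t0 : R, t0 ≠ 0 → specSAut t0 h hh ∈ N) → specSAut 0 h hh ∈ N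

/-- A subgroup `N` of `Aut_k(𝔸ⁿ)` is closed under specialisation if for every
automorphism `h` over `k[t]` all of whose specialisations at `t₀ ≠ 0` lie in `N`,
the specialisation at `0` also lies in `N`. -/
def ClosedUnderSpecAut {R : Type*} [CommRing R] {n : ℕ} (N : Subgroup (PolyAut R n)) : Prop :=
  ∀ h : PolyAut (Polynomial R) n,
    (∀ t0 : R, t0 ≠ 0 → specAut t0 h ∈ N) → specAut 0 h ∈ N

end Map

/-!
Composing `f` with an affine automorphism defined over `A` (translation by `-f(0)`, then the
inverse of the linear part, which is invertible over `A` because its determinant is the constant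
term of `Jac f`), we may assume `f = X + h` with `h` of order at least `2`. Its inverse `G` over
`B` vanishes at `0` and satisfies `G = X - h(G)`. As `h` has order `≥ 2`, the right-hand side
modulo `(X)^(e+2)` depends only on `G` modulo `(X)^(e+1)`, so by induction on `e` each `G_i` is
congruent modulo `(X)^(e+1)` to a polynomial over `A`; hence all coefficients of `G` lie in `A`.
Conversely, the Jacobian of an automorphism is a unit of `A[X]`, hence a unit of `A`.
-/

theorem Finsupp.eq_zero_or_exists_eq_single_of_degree_lt_two {σ : Type*} {x : σ →₀ ℕ}
    (hx : x.degree < 2) : x = 0 ∨ ∃ k, x = single k 1 := by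
  rcases eq_or_ne x 0 with rfl | hx0
  · exact .inl rfl
  obtain ⟨k, hk⟩ := ne_iff.mp hx0
  have hle : single k 1 ≤ x := single_le_iff.mpr (Nat.one_le_iff_ne_zero.mpr hk)
  have hdeg := congrArg degree (add_tsub_cancel_of_le hle)
  rw [map_add, degree_single] at hdeg
  have hrest : x - single k 1 = 0 := (degree_eq_zero_iff _).mp (by omega)
  exact .inr ⟨k, le_antisymm (tsub_eq_zero_iff_le.mp hrest) hle⟩

namespace MvPolynomial

variable {σ τ R S : Type*} [CommRing R] [CommRing S]

theorem sub_C_sub_sum_mem_idealOfVars_sq [Fintype σ] (p : MvPolynomial σ R) :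
    p - C (constantCoeff p) - ∑ k, C (coeff (Finsupp.single k 1) p) * X k
      ∈ idealOfVars σ R ^ 2 := by
  classical
  refine (mem_pow_idealOfVars_iff' _ _).mpr fun x hx => ?_
  rcases Finsupp.eq_zero_or_exists_eq_single_of_degree_lt_two hx with rfl | ⟨k, rfl⟩
  · simp [coeff_sum, coeff_X, constantCoeff_eq]
  · simp [coeff_sum, coeff_X, coeff_C, Finsupp.single_left_inj, eq_comm (a := (0 : σ →₀ ℕ))]

theorem map_mem_pow_idealOfVars (φ : R →+* S) {k : ℕ} {p : MvPolynomial σ R}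
    (hp : p ∈ idealOfVars σ R ^ k) : map φ p ∈ idealOfVars σ S ^ k := by
  rw [mem_pow_idealOfVars_iff'] at hp ⊢
  intro x hx
  rw [coeff_map, hp x hx, map_zero]

theorem bind₁_sub_bind₁_mem {J : Ideal (MvPolynomial τ R)} {q q' : σ → MvPolynomial τ R}
    (h : ∀ i, q i - q' i ∈ J) (p : MvPolynomial σ R) : bind₁ q p - bind₁ q' p ∈ J := by
  have hcomp :
      (Ideal.Quotient.mkₐ R J).comp (bind₁ q) = (Ideal.Quotient.mkₐ R J).comp (bind₁ q') :=
    algHom_ext fun i => by simpa [Ideal.Quotient.mkₐ_eq_mk, Ideal.Quotient.eq] using h i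
  simpa [Ideal.Quotient.mkₐ_eq_mk, Ideal.Quotient.eq] using DFunLike.congr_fun hcomp p

theorem bind₁_mem_of_mem_idealOfVars {K : Ideal (MvPolynomial τ R)} {q : σ → MvPolynomial τ R}
    (hq : ∀ i, q i ∈ K) {p : MvPolynomial σ R} (hp : p ∈ idealOfVars σ R) : bind₁ q p ∈ K :=
  (Ideal.span_le (I := K.comap (bind₁ q)).mpr
    (Set.range_subset_iff.mpr fun i => by simpa using hq i)) hp

theorem bind₁_sub_bind₁_mem_mul {K J : Ideal (MvPolynomial τ R)} {q q' : σ → MvPolynomial τ R}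
    (hq : ∀ i, q i ∈ K) (hq' : ∀ i, q' i ∈ K) (h : ∀ i, q i - q' i ∈ J)
    {p : MvPolynomial σ R} (hp : p ∈ idealOfVars σ R ^ 2) :
    bind₁ q p - bind₁ q' p ∈ K * J := by
  rw [sq] at hp
  induction hp using Submodule.mul_induction_on' with
  | mem_mul_mem a ha b hb =>
    have hsplit : bind₁ q (a * b) - bind₁ q' (a * b)
        = bind₁ q a * (bind₁ q b - bind₁ q' b) + (bind₁ q a - bind₁ q' a) * bind₁ q' b := by
      simp only [map_mul]; ring
    rw [hsplit]
    exact add_mem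
      (Ideal.mul_mem_mul (bind₁_mem_of_mem_idealOfVars hq ha) (bind₁_sub_bind₁_mem h b))
      (Ideal.mul_mem_mul_rev (bind₁_mem_of_mem_idealOfVars hq' hb) (bind₁_sub_bind₁_mem h a))
  | add x _ y _ hx hy =>
    rw [map_add, map_add, add_sub_add_comm]
    exact add_mem hx hy

theorem exists_map_eq_of_forall_sub_mem_pow {A : Subring S} {p : MvPolynomial σ S}
    (h : ∀ e, ∃ a : MvPolynomial σ A, p - map A.subtype a ∈ idealOfVars σ S ^ (e + 1)) :
    ∃ a : MvPolynomial σ A, map A.subtype a = p := by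
  refine mem_range_map_iff_coeffs_subset.mpr fun c hc => ?_
  obtain ⟨x, -, rfl⟩ := mem_coeffs_iff.mp hc
  obtain ⟨a, ha⟩ := h x.degree
  have hx := (mem_pow_idealOfVars_iff' _ _).mp ha x (Nat.lt_succ_self _)
  rw [coeff_sub, coeff_map, sub_eq_zero] at hx
  exact ⟨_, hx.symm⟩

theorem exists_map_eq_of_bind₁_eq_X {A : Subring S} {f : σ → MvPolynomial σ A}
    (hf : ∀ i, f i - X i ∈ idealOfVars σ A ^ 2) {G : σ → MvPolynomial σ S}
    (hfG : ∀ i, bind₁ G (map A.subtype (f i)) = X i)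
    (hGf : ∀ i, bind₁ (fun j => map A.subtype (f j)) (G i) = X i) (i : σ) :
    ∃ g : MvPolynomial σ A, map A.subtype g = G i := by
  set I := idealOfVars σ S
  have hh : ∀ i, map A.subtype (f i) - X i ∈ I ^ 2 := fun i => by
    simpa using map_mem_pow_idealOfVars A.subtype (hf i)
  have hG : ∀ i, G i ∈ I := by
    intro i
    have hsub := bind₁_sub_bind₁_mem (fun j => Ideal.pow_le_self two_ne_zero (hh j)) (G i)
    rw [hGf, bind₁_X_left, AlgHom.id_apply] at hsub
    simpa using sub_mem (Ideal.subset_span ⟨i, rfl⟩ : X i ∈ I) hsub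
  have happrox :
      ∀ e, ∃ a : σ → MvPolynomial σ A, ∀ i, G i - map A.subtype (a i) ∈ I ^ (e + 1) := by
    intro e
    induction e with
    | zero => exact ⟨0, fun i => by simpa using hG i⟩
    | succ e ih =>
      obtain ⟨a, ha⟩ := ih
      have haI : ∀ j, map A.subtype (a j) ∈ I := fun j => by
        simpa using sub_mem (hG j) (Ideal.pow_le_self e.succ_ne_zero (ha j))
      -- one step of the fixed-point iteration `G = X - h(G)`
      refine ⟨fun i => X i - bind₁ a (f i - X i), fun i => ?_⟩
      have hfix : G i + bind₁ G (map A.subtype (f i) - X i) = X i := by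
        rw [map_sub, bind₁_X_right, hfG]; ring
      have hdiff : G i - map A.subtype (X i - bind₁ a (f i - X i))
          = bind₁ (fun j => map A.subtype (a j)) (map A.subtype (f i) - X i)
            - bind₁ G (map A.subtype (f i) - X i) := by
        rw [map_sub, map_X, map_bind₁, map_sub, map_X]
        linear_combination hfix
      rw [hdiff, pow_succ']
      exact bind₁_sub_bind₁_mem_mul haI hG (fun j => by simpa using neg_mem (ha j)) (hh i)
  exact exists_map_eq_of_forall_sub_mem_pow fun e => (happrox e).elim fun a ha => ⟨a i, ha i⟩

end MvPolynomial

section Affine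

variable {R : Type*} [CommRing R] {n : ℕ}

theorem translEnd_mul_apply (c : Fin n → R) (f : PolyEnd R n) (i : Fin n) :
    (translEnd c * f) i = f i + C (c i) := by
  simp [translEnd, bind₁_X_right f]

theorem linEnd_mul (M M' : Matrix (Fin n) (Fin n) R) :
    linEnd M * linEnd M' = linEnd (M * M') := by
  funext i
  show bind₁ (linEnd M') (∑ j, C (M i j) * X j) = ∑ k, C ((M * M') i k) * X k
  simp only [map_sum, map_mul, bind₁_C_right (linEnd M'), bind₁_X_right (linEnd M'), linEnd,
    Matrix.mul_apply, Finset.mul_sum, Finset.sum_mul, ← mul_assoc]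
  exact Finset.sum_comm

theorem linEnd_one : linEnd (1 : Matrix (Fin n) (Fin n) R) = 1 := by
  funext i
  simp [linEnd, Matrix.one_apply]

theorem isUnit_linEnd {M : Matrix (Fin n) (Fin n) R} (hM : IsUnit M) : IsUnit (linEnd M) := by
  obtain ⟨U, rfl⟩ := hM
  exact ⟨⟨linEnd U, linEnd ↑U⁻¹, by rw [linEnd_mul, U.mul_inv, linEnd_one],
    by rw [linEnd_mul, U.inv_mul, linEnd_one]⟩, rfl⟩

end Affine

namespace PolyEnd

variable {R S : Type*} [CommRing R] [CommRing S] {n : ℕ}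

noncomputable def linearPart (f : PolyEnd R n) : Matrix (Fin n) (Fin n) R :=
  Matrix.of fun i j => coeff (Finsupp.single j 1) (f i)

theorem det_linearPart (f : PolyEnd R n) : (linearPart f).det = constantCoeff (jac f) := by
  rw [jac, RingHom.map_det]
  congr 1
  ext i j
  simp [linearPart, constantCoeff_eq, coeff_pderiv]

theorem isUnit_linearPart_of_jac_eq_C {f : PolyEnd R n} {u : Rˣ} (h : jac f = C (u : R)) :
    IsUnit (linearPart f) := by
  rw [Matrix.isUnit_iff_isUnit_det, det_linearPart, h, constantCoeff_C]
  exact u.isUnit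

theorem exists_jac_eq_C_of_isUnit [IsReduced R] {f : PolyEnd R n} (hf : IsUnit f) :
    ∃ u : Rˣ, jac f = C (u : R) := by
  obtain ⟨v, rfl⟩ := hf
  have h : bind₁ (v : PolyEnd R n) (jac ↑v⁻¹) * jac ↑v = 1 := by
    rw [← jac_mul, v.inv_mul, jac_one]
  obtain ⟨r, hr, hC⟩ := isUnit_iff_eq_C_of_isReduced.mp (IsUnit.of_mul_eq_one_right _ h)
  exact ⟨hr.unit, hC⟩

theorem endMapHom_injective {φ : R →+* S} (hφ : Function.Injective φ) :
    Function.Injective (endMapHom (n := n) φ) :=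
  fun _ _ h => funext fun i => map_injective φ hφ (congrFun h i)

theorem isUnit_of_isUnit_endMapHom_of_sub_X_mem {A : Subring S} {f : PolyEnd A n}
    (hf : ∀ i, f i - X i ∈ idealOfVars (Fin n) A ^ 2) (hB : IsUnit (endMapHom A.subtype f)) :
    IsUnit f := by
  obtain ⟨F, hF⟩ := hB
  have hFG : endMapHom A.subtype f * ↑F⁻¹ = 1 := by rw [← hF, F.mul_inv]
  have hGF : ↑F⁻¹ * endMapHom A.subtype f = 1 := by rw [← hF, F.inv_mul]
  obtain ⟨g, hg⟩ : ∃ g : PolyEnd A n, ∀ i, map A.subtype (g i) = (↑F⁻¹ : PolyEnd S n) i :=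
    Classical.skolem.mp
      (exists_map_eq_of_bind₁_eq_X hf (fun i => congrFun hFG i) (fun i => congrFun hGF i))
  have hmap : endMapHom A.subtype g = ↑F⁻¹ := funext hg
  refine ⟨⟨f, g, endMapHom_injective A.subtype_injective ?_,
    endMapHom_injective A.subtype_injective ?_⟩, rfl⟩
  · rw [map_mul, map_one, hmap, hFG]
  · rw [map_mul, map_one, hmap, hGF]

theorem isUnit_of_isUnit_endMapHom_of_isUnit_linearPart {A : Subring S} {f : PolyEnd A n}
    (hB : IsUnit (endMapHom A.subtype f)) (hL : IsUnit (linearPart f)) : IsUnit f := by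
  obtain ⟨U, hU⟩ := hL
  set c : Fin n → A := fun i => constantCoeff (f i)
  have hT : IsUnit (translEnd (-c)) := ⟨transl (-c), rfl⟩
  have hN : IsUnit (linEnd (↑U⁻¹ : Matrix (Fin n) (Fin n) A)) := isUnit_linEnd U⁻¹.isUnit
  have hlin : ∀ i, (translEnd (-c) * f) i - linEnd (linearPart f) i
      ∈ idealOfVars (Fin n) A ^ 2 := fun i => by
    rw [translEnd_mul_apply]
    simpa [c, linEnd, linearPart, ← sub_eq_add_neg] using sub_C_sub_sum_mem_idealOfVars_sq (f i)
  have hX : ∀ i, (linEnd (↑U⁻¹ : Matrix (Fin n) (Fin n) A) * (translEnd (-c) * f)) i - X i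
      ∈ idealOfVars (Fin n) A ^ 2 := fun i => by
    have h := bind₁_sub_bind₁_mem hlin (linEnd (↑U⁻¹ : Matrix (Fin n) (Fin n) A) i)
    rwa [← PolyEnd.mul_apply, ← PolyEnd.mul_apply, linEnd_mul, ← hU, U.inv_mul, linEnd_one,
      PolyEnd.one_apply] at h
  have hB' : IsUnit (endMapHom A.subtype (linEnd ↑U⁻¹ * (translEnd (-c) * f))) := by
    rw [map_mul, map_mul]
    exact (hN.map _).mul ((hT.map _).mul hB)
  exact hT.mul_left_iff.mp (hN.mul_left_iff.mp (isUnit_of_isUnit_endMapHom_of_sub_X_mem hX hB'))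

end PolyEnd

theorem isUnit_of_isUnit_map_of_jac_unit_general {B : Type*} [CommRing B] [IsDomain B] (A : Subring B)
    {n : ℕ} (f : PolyEnd A n)
    (hB : IsUnit (endMapHom (A.subtype) f))
    (hJ : ∃ u : (↥A)ˣ, PolyEnd.jac f = C (u : ↥A)) :
    IsUnit f ∧
      ∀ g : PolyEnd A n, IsUnit g ↔
        (IsUnit (endMapHom (A.subtype) g) ∧ ∃ u : (↥A)ˣ, PolyEnd.jac g = C (u : ↥A)) := by
  have key : ∀ g : PolyEnd A n, IsUnit g ↔
      (IsUnit (endMapHom (A.subtype) g) ∧ ∃ u : (↥A)ˣ, PolyEnd.jac g = C (u : ↥A)) :=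
    fun g => ⟨fun hg => ⟨hg.map _, PolyEnd.exists_jac_eq_C_of_isUnit hg⟩,
      fun ⟨hBg, _, hu⟩ => PolyEnd.isUnit_of_isUnit_endMapHom_of_isUnit_linearPart hBg
        (PolyEnd.isUnit_linearPart_of_jac_eq_C hu)⟩
  exact ⟨(key f).mpr ⟨hB, hJ⟩, key⟩

/-- **Lemma.**  Let `B` be an integral domain and `A ⊆ B` a subring.  An endomorphism over `A`
which is invertible over `B` and whose Jacobian is a unit of `A` is invertible over `A`;
consequently `Aut_A(𝔸ⁿ) = {f ∈ End_A(𝔸ⁿ) ∩ Aut_B(𝔸ⁿ) : Jac(f) ∈ A^*}`. -/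
theorem isUnit_of_isUnit_map_of_jac_unit {B : Type*} [CommRing B] [IsDomain B] (A : Subring B)
    {n : ℕ} (hn : 1 ≤ n) (f : PolyEnd A n)
    (hB : IsUnit (endMapHom (A.subtype) f))
    (hJ : ∃ u : (↥A)ˣ, PolyEnd.jac f = C (u : ↥A)) :
    IsUnit f ∧
      ∀ g : PolyEnd A n, IsUnit g ↔
        (IsUnit (endMapHom (A.subtype) g) ∧ ∃ u : (↥A)ˣ, PolyEnd.jac g = C (u : ↥A)) :=
  isUnit_of_isUnit_map_of_jac_unit_general A f hB hJ
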